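/- For every Schwartz function φ on ℝ^d, the Fourier transform of Aφ satisfies (Aφ)^(k) = (2π)^{d/2} (â(k) - â(0)) φ̂(k) for all k ∈ ℝ^d. -/

import Mathlib

open MeasureTheory

/-- Fourier transform f̂(k) = (2π)^{-d/2} ∫ e^{-i⟨x,k⟩} f(x) dx. -/
noncomputable def ft {d : ℕ} (f : EuclideanSpace ℝ (Fin d) → ℂ)
    (k : EuclideanSpace ℝ (Fin d)) : ℂ :=
  (((2 * Real.pi) ^ (-(d : ℝ) / 2) : ℝ) : ℂ) *
    ∫ x, Complex.exp (-Complex.I * ((inner ℝ x k : ℝ) : ℂ)) * f x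

/-! Splitting the integrand gives `Aφ = a ⋆ φ - (∫ a) φ`, the convolution existing because `a` is
integrable and `φ` is bounded. Since `ft f k` is `(2π)^{-d/2} 𝓕 f (k / 2π)` in terms of
Mathlib's `𝓕`, the convolution theorem turns the first term into `(2π)^{d/2} â φ̂`, and the second
is `(2π)^{d/2} â(0) φ̂`. -/

open ContinuousLinearMap
open scoped Convolution FourierTransform BoundedContinuousFunction

section Convolution

variable {𝕜 G : Type*} [RCLike 𝕜] [AddCommGroup G] [MeasurableSpace G] {μ : Measure G}

theorem MeasureTheory.Integrable.convolutionExists_mul_boundedContinuous [TopologicalSpace G]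
    [ContinuousSub G] [OpensMeasurableSpace G] {a : G → 𝕜} (ha : Integrable a μ) (f : G →ᵇ 𝕜) :
    ConvolutionExists a f (mul 𝕜 𝕜) μ := fun _ =>
  ha.mul_bdd (f.continuous.comp (continuous_const.sub continuous_id)).aestronglyMeasurable
    (Filter.Eventually.of_forall fun _ => f.norm_coe_le_norm _)

variable [MeasurableAdd G] [MeasurableNeg G] [μ.IsAddLeftInvariant] [μ.IsNegInvariant]

theorem integral_mul_sub_eq_convolution_sub {a f : G → 𝕜} {x : G} (ha : Integrable a μ)
    (haf : ConvolutionExistsAt a f x (mul 𝕜 𝕜) μ) :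
    ∫ y, a (x - y) * (f y - f x) ∂μ = (a ⋆[mul 𝕜 𝕜, μ] f) x - (∫ y, a y ∂μ) * f x := by
  have hconv : Integrable (fun y => a (x - y) * f y) μ := haf.integrable_swap
  simp_rw [mul_sub]
  rw [integral_sub hconv ((ha.comp_sub_left x).mul_const _), integral_mul_const,
    integral_sub_left_eq_self a μ x, ← convolution_flip, convolution_def]
  simp only [flip_apply, mul_apply']

end Convolution

theorem two_pi_rpow_half_mul_rpow_neg_half (d : ℕ) :
    (((2 * Real.pi) ^ ((d : ℝ) / 2) : ℝ) : ℂ) * (((2 * Real.pi) ^ (-(d : ℝ) / 2) : ℝ) : ℂ) = 1 := by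
  rw [← Complex.ofReal_mul, neg_div, Real.rpow_neg (by positivity),
    mul_inv_cancel₀ (by positivity), Complex.ofReal_one]

section FourierTransform

variable {d : ℕ}

theorem ft_eq_fourier (f : EuclideanSpace ℝ (Fin d) → ℂ) (k : EuclideanSpace ℝ (Fin d)) :
    ft f k = (((2 * Real.pi) ^ (-(d : ℝ) / 2) : ℝ) : ℂ) * 𝓕 f ((2 * Real.pi)⁻¹ • k) := by
  rw [ft, Real.fourier_eq']
  congr 2 with x
  rw [inner_smul_right, smul_eq_mul]
  congr 1
  push_cast
  field_simp

theorem ft_sub {f g : EuclideanSpace ℝ (Fin d) → ℂ} (hf : Integrable f) (hg : Integrable g)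
    (k : EuclideanSpace ℝ (Fin d)) : ft (fun x => f x - g x) k = ft f k - ft g k := by
  simp only [ft_eq_fourier, Real.fourier_eq, smul_sub, ← mul_sub]
  rw [integral_sub] <;> simpa

theorem ft_const_mul (c : ℂ) (f : EuclideanSpace ℝ (Fin d) → ℂ) (k : EuclideanSpace ℝ (Fin d)) :
    ft (fun x => c * f x) k = c * ft f k := by
  simp only [ft, mul_left_comm _ c, integral_const_mul]

theorem ft_apply_zero (f : EuclideanSpace ℝ (Fin d) → ℂ) :
    ft f 0 = (((2 * Real.pi) ^ (-(d : ℝ) / 2) : ℝ) : ℂ) * ∫ x, f x := by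
  simp [ft]

theorem ft_mul_convolution_eq {f g : EuclideanSpace ℝ (Fin d) → ℂ} (hf : Integrable f)
    (hg : Integrable g) (k : EuclideanSpace ℝ (Fin d)) :
    ft (f ⋆[mul ℂ ℂ] g) k = (((2 * Real.pi) ^ ((d : ℝ) / 2) : ℝ) : ℂ) * ft f k * ft g k := by
  simp only [ft_eq_fourier, Real.fourier_mul_convolution_eq hf hg]
  rw [mul_mul_mul_comm, ← mul_assoc, two_pi_rpow_half_mul_rpow_neg_half, one_mul, mul_assoc]

end FourierTransform

theorem fourier_transform_of_one_particle_operator_general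
    (d : ℕ) (a : EuclideanSpace ℝ (Fin d) → ℝ)
    (ha_int : Integrable a)
    (φ : SchwartzMap (EuclideanSpace ℝ (Fin d)) ℂ) (k : EuclideanSpace ℝ (Fin d)) :
    ft (fun x => ∫ y, (a (x - y) : ℂ) * (φ y - φ x)) k =
      (((2 * Real.pi) ^ ((d : ℝ) / 2) : ℝ) : ℂ) *
        (ft (fun x => (a x : ℂ)) k - ft (fun x => (a x : ℂ)) 0) * ft (⇑φ) k := by
  have ha : Integrable (fun x => (a x : ℂ)) := ha_int.ofReal
  have hconv := ha.convolutionExists_mul_boundedContinuous φ.toBoundedContinuousFunction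
  have hsplit : (fun x => ∫ y, (a (x - y) : ℂ) * (φ y - φ x)) =
      fun x => ((fun x => (a x : ℂ)) ⋆[mul ℂ ℂ] φ) x - (∫ y, (a y : ℂ)) * φ x :=
    funext fun x => integral_mul_sub_eq_convolution_sub ha (hconv x)
  rw [hsplit, ft_sub (ha.integrable_convolution _ φ.integrable) (φ.integrable.const_mul _),
    ft_const_mul, ft_mul_convolution_eq ha φ.integrable, ft_apply_zero]
  linear_combination ((∫ y, (a y : ℂ)) * ft φ k) * two_pi_rpow_half_mul_rpow_neg_half d

/-- For every Schwartz function φ, the Fourier transform of Aφ satisfies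
(Aφ)^(k) = (2π)^{d/2} (â(k) - â(0)) φ̂(k). -/
theorem fourier_transform_of_one_particle_operator
    (d : ℕ) (a : EuclideanSpace ℝ (Fin d) → ℝ)
    (ha_nonneg : ∀ x, 0 ≤ a x) (ha_int : Integrable a)
    (φ : SchwartzMap (EuclideanSpace ℝ (Fin d)) ℂ) (k : EuclideanSpace ℝ (Fin d)) :
    ft (fun x => ∫ y, (a (x - y) : ℂ) * (φ y - φ x)) k =
      (((2 * Real.pi) ^ ((d : ℝ) / 2) : ℝ) : ℂ) *
        (ft (fun x => (a x : ℂ)) k - ft (fun x => (a x : ℂ)) 0) * ft (⇑φ) k :=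
  fourier_transform_of_one_particle_operator_general d a ha_int φ k
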